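/- Let M and N be interval persistence modules over ℝⁿ with intervals I_M and I_N, let Q be a connected component of the intersection I_M ∩ I_N with interval I, and let φ : M → N be any morphism (natural transformation). Then the restriction of φ to I is constant: there is a ∈ k such that φ_x = a·id for all x ∈ I. -/

import Mathlib

open scoped ENNReal NNReal
open Filter
noncomputable section
attribute [local instance] Classical.propDecidable
set_option linter.unusedVariables false

/-- Points of the poset ℝⁿ. The product instance gives the pointwise partial order
and the sup-norm metric. -/
abbrev Pt (n : ℕ) := Fin n → ℝ

/-- The diagonal vector δ⃗ = (δ,...,δ). -/
def diag (n : ℕ) (δ : ℝ) : Pt n := fun _ => δ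

lemma le_add_diag {n : ℕ} (x : Pt n) {δ : ℝ} (hδ : 0 ≤ δ) : x ≤ x + diag n δ :=
  fun _ => le_add_of_nonneg_right hδ

/-- A (p.f.d.-agnostic) persistence module over the poset ℝⁿ with values in
k-vector spaces: a functor from ℝⁿ to Vec. -/
structure PersMod (n : ℕ) (k : Type*) [Field k] where
  V : Pt n → Type*
  [addgrp : ∀ x, AddCommGroup (V x)]
  [mod : ∀ x, Module k (V x)]
  ρ : ∀ {x y : Pt n}, x ≤ y → (V x →ₗ[k] V y)
  ρ_id : ∀ x : Pt n, ρ (le_refl x) = LinearMap.id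
  ρ_comp : ∀ {x y z : Pt n} (h1 : x ≤ y) (h2 : y ≤ z), ρ (h1.trans h2) = (ρ h2).comp (ρ h1)

attribute [instance] PersMod.addgrp PersMod.mod

variable {n : ℕ} {k : Type*} [Field k]

/-- A morphism (natural transformation) of persistence modules. -/
structure PersHom (M N : PersMod n k) where
  app : ∀ x, M.V x →ₗ[k] N.V x
  natural : ∀ {x y : Pt n} (h : x ≤ y), (app y).comp (M.ρ h) = (N.ρ h).comp (app x)

/-- A δ-interleaving between M and N: families φ_x : M_x → N_{x+δ⃗},
ψ_x : N_x → M_{x+δ⃗} satisfying square and triangular commutativity. -/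
def PersMod.Interleaved (M N : PersMod n k) (δ : ℝ≥0) : Prop :=
  ∃ (φ : ∀ x : Pt n, M.V x →ₗ[k] N.V (x + diag n (δ : ℝ)))
    (ψ : ∀ x : Pt n, N.V x →ₗ[k] M.V (x + diag n (δ : ℝ))),
    (∀ {x y : Pt n} (h : x ≤ y),
        (φ y).comp (M.ρ h) = (N.ρ (add_le_add_left h _)).comp (φ x)) ∧
    (∀ {x y : Pt n} (h : x ≤ y),
        (ψ y).comp (N.ρ h) = (M.ρ (add_le_add_left h _)).comp (ψ x)) ∧
    (∀ x : Pt n, M.ρ ((le_add_diag x δ.coe_nonneg).trans (le_add_diag _ δ.coe_nonneg))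
        = (ψ (x + diag n (δ : ℝ))).comp (φ x)) ∧
    (∀ x : Pt n, N.ρ ((le_add_diag x δ.coe_nonneg).trans (le_add_diag _ δ.coe_nonneg))
        = (φ (x + diag n (δ : ℝ))).comp (ψ x))

/-- The interleaving distance (∞ if no interleaving exists). -/
def PersMod.dI (M N : PersMod n k) : ℝ≥0∞ :=
  ⨅ (δ : ℝ≥0) (_ : M.Interleaved N δ), (δ : ℝ≥0∞)

/-- The diagonal shift M_{→d}. -/
def PersMod.dshift (M : PersMod n k) (d : ℝ) : PersMod n k where
  V x := M.V (x + diag n d)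
  ρ h := M.ρ (add_le_add_left h _)
  ρ_id x := M.ρ_id _
  ρ_comp h1 h2 := M.ρ_comp _ _

/-- M is c-trivial: every structure map over a diagonal shift by c is zero. -/
def PersMod.DTrivial (M : PersMod n k) (c : ℝ≥0) : Prop :=
  ∀ x : Pt n, M.ρ (le_add_diag x c.coe_nonneg) = 0

/-- The 1-parameter slice of M along the diagonal line through x. -/
def PersMod.slice (M : PersMod n k) (x : Pt n) : PersMod 1 k where
  V t := M.V (x + diag n (t 0))
  ρ {t t'} h := M.ρ (fun i => add_le_add_right (h 0) (x i))
  ρ_id t := M.ρ_id _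
  ρ_comp h1 h2 := M.ρ_comp _ _

/-- δ* = sup over diagonal lines of the slice interleaving distances. -/
def deltaStar (M N : PersMod n k) : ℝ≥0∞ :=
  ⨆ x : Pt n, (M.slice x).dI (N.slice x)

/-- Finite direct sum of persistence modules. -/
def dirSum {ι : Type} [Fintype ι] (Ms : ι → PersMod n k) : PersMod n k where
  V x := ∀ i, (Ms i).V x
  ρ h := LinearMap.pi (fun i => ((Ms i).ρ h).comp (LinearMap.proj i))
  ρ_id x := by
    apply LinearMap.ext; intro v; funext i
    simp [(Ms i).ρ_id]
  ρ_comp h1 h2 := by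
    apply LinearMap.ext; intro v; funext i
    show ((Ms i).ρ (h1.trans h2)) (v i) = _
    rw [(Ms i).ρ_comp h1 h2]; rfl

/-- Zigzag reachability inside a set: p ≤ p₁ ≥ p₂ ≤ ... with all points in A. -/
def Zigzag (A : Set (Pt n)) : Pt n → Pt n → Prop :=
  Relation.ReflTransGen (fun a b => a ∈ A ∧ b ∈ A ∧ (a ≤ b ∨ b ≤ a))

/-- An interval: nonempty, order-convex, zigzag-connected. -/
def IsPInterval (I : Set (Pt n)) : Prop :=
  I.Nonempty ∧ (∀ p ∈ I, ∀ q ∈ I, ∀ r, p ≤ r → r ≤ q → r ∈ I) ∧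
    ∀ p ∈ I, ∀ q ∈ I, Zigzag I p q

/-- Q is a (zigzag-)connected component of A. -/
def IsComponent (A Q : Set (Pt n)) : Prop :=
  ∃ p ∈ A, Q = {q | Zigzag A p q}

/-- The fibre of the interval module with interval I: k on I, 0 elsewhere,
realised as a submodule of k. -/
def subOf (k : Type*) [Field k] (I : Set (Pt n)) (x : Pt n) : Submodule k k :=
  if x ∈ I then ⊤ else ⊥

/-- The canonical map between fibres: identity within I, zero otherwise. -/
def stepFun (I : Set (Pt n)) (x y : Pt n) :
    ↥(subOf k I x) →ₗ[k] ↥(subOf k I y) where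
  toFun v := ⟨if y ∈ I then (v : k) else 0, by
    by_cases hy : y ∈ I
    · simp only [hy, if_true, subOf]; exact Submodule.mem_top
    · simp only [hy, if_false]; exact Submodule.zero_mem _⟩
  map_add' a b := by
    by_cases hy : y ∈ I <;> · apply Subtype.ext; simp [hy]
  map_smul' c a := by
    by_cases hy : y ∈ I <;> · apply Subtype.ext; simp [hy]

/-- The interval module with interval I. -/
def IntervalMod (k : Type*) [Field k] (I : Set (Pt n)) (hI : IsPInterval I) :
    PersMod n k where
  V x := ↥(subOf k I x)
  ρ {x y} _ := stepFun I x y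
  ρ_id x := by
    apply LinearMap.ext; intro v
    apply Subtype.ext
    by_cases hx : x ∈ I
    · simp [stepFun, hx]
    · have hv : (v : k) = 0 := by have h : (v : k) ∈ (if x ∈ I then ⊤ else ⊥ : Submodule k k) := v.2; rw [if_neg hx, Submodule.mem_bot] at h; exact h
      simp [stepFun, hx, hv]
  ρ_comp {x y z} h1 h2 := by
    apply LinearMap.ext; intro v
    apply Subtype.ext
    by_cases hz : z ∈ I
    · by_cases hy : y ∈ I
      · simp [stepFun, hy, hz]
      · have hx : x ∉ I := fun hx => hy (hI.2.1 x hx z hz y h1 h2)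
        have hv : (v : k) = 0 := by have h : (v : k) ∈ (if x ∈ I then ⊤ else ⊥ : Submodule k k) := v.2; rw [if_neg hx, Submodule.mem_bot] at h; exact h
        simp [stepFun, hy, hz, hv]
    · simp [stepFun, hz]

/-- Lower boundary L(I). -/
def lowerBd (I : Set (Pt n)) : Set (Pt n) :=
  {x | x ∈ closure I ∧ ∀ y : Pt n, (∀ i, y i < x i) → y ∉ I}

/-- Upper boundary U(I). -/
def upperBd (I : Set (Pt n)) : Set (Pt n) :=
  {x | x ∈ closure I ∧ ∀ y : Pt n, (∀ i, x i < y i) → y ∉ I}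

/-- Diagonal distance dl(x, A): the infimum of sup-norm distances from x to
points of A along the diagonal line Δ_x, ∞ when Δ_x ∩ A = ∅. -/
def dl (x : Pt n) (A : Set (Pt n)) : ℝ≥0∞ :=
  ⨅ (α : ℝ) (_ : x + diag n α ∈ A), ENNReal.ofReal |α|

/-- d_triv^{(M,N)}(x) = max(dl(x,U(I_M))/2, dl(x,L(I_N))/2). -/
def dtriv (IM IN : Set (Pt n)) (x : Pt n) : ℝ≥0∞ :=
  max (dl x (upperBd IM) / 2) (dl x (lowerBd IN) / 2)

/-- An intersection component with interval Q is δ_{(M,N)}-trivializable. -/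
def Trivializable (IM IN Q : Set (Pt n)) (δ : ℝ≥0∞) : Prop :=
  ∀ x ∈ Q, dtriv IM IN x < δ

/-- (M,N)-validity of an intersection component with interval Q. -/
def MNValid (IM IN Q : Set (Pt n)) : Prop :=
  ∀ x ∈ Q, (∀ y : Pt n, y ≤ x → y ∈ IM → y ∈ IN) ∧
    (∀ z : Pt n, x ≤ z → z ∈ IN → z ∈ IM)

/-- The interval of the shifted module N_{→d}. -/
def shiftSet (I : Set (Pt n)) (d : ℝ) : Set (Pt n) := {x | x + diag n d ∈ I}

/-- A vertex of (the boundary of) a set: a boundary point through which no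
nontrivial line segment of the boundary passes. -/
def IsVertex (I : Set (Pt n)) (x : Pt n) : Prop :=
  x ∈ frontier I ∧
    ¬ ∃ v : Pt n, v ≠ 0 ∧ ∃ ε > (0:ℝ), ∀ t : ℝ, |t| < ε → x + t • v ∈ frontier I

/-- An axis-aligned (possibly degenerate) rectangle. -/
def IsRect (R : Set (Pt n)) : Prop := ∃ a b : Pt n, a ≤ b ∧ R = Set.Icc a b

/-- A discretely presented interval: a finite union of rectangles. -/
def DiscPresented (I : Set (Pt n)) : Prop :=
  ∃ F : Finset (Set (Pt n)), (∀ R ∈ F, IsRect R) ∧ I = ⋃ R ∈ F, (R : Set (Pt n))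

/-- f is a facet of I orthogonal to direction i: contained in a hyperplane
{y_i = c}, contained in the lower or upper boundary, and (n−1)-dimensional
(contains a full hyperplane patch around one of its points). -/
def IsFacetDir (I : Set (Pt n)) (f : Set (Pt n)) (i : Fin n) : Prop :=
  ∃ c : ℝ, f ⊆ {y | y i = c} ∧ (f ⊆ lowerBd I ∨ f ⊆ upperBd I) ∧
    ∃ z ∈ f, ∃ ε > (0:ℝ), ∀ y : Pt n, y i = c → dist y z < ε → y ∈ f

/-- The set D(x) of the four diagonal boundary distances. -/
def candD (IM IN : Set (Pt n)) (x : Pt n) : Set ℝ≥0∞ :=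
  {dl x (lowerBd IM), dl x (lowerBd IN), dl x (upperBd IM), dl x (upperBd IN)}

/-- The candidate set S. -/
def candS (IM IN : Set (Pt n)) : Set ℝ≥0∞ :=
  {d | ∃ x : Pt n, (IsVertex IM x ∨ IsVertex IN x) ∧
    (d ∈ candD IM IN x ∨ 2 * d ∈ candD IM IN x)}

/-- One-sided limit lim_{ε→0+} f(x − ε v) (junk value if the limit fails to exist). -/
def dlim (f : Pt n → ℤ) (x v : Pt n) : ℤ :=
  limUnder (nhdsWithin (0:ℝ) (Set.Ioi 0)) (fun ε : ℝ => f (x - ε • v))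

/-- The indicator vector Σ_{i ∈ s} e_i. -/
def basisVec (n : ℕ) (s : Finset (Fin n)) : Pt n := fun i => if i ∈ s then 1 else 0

/-- The differential Δf(x) = Σ_k (−1)^k Σ_{|s|=k} lim_{ε→0+} f(x − ε Σ_{i∈s} e_i). -/
def diffl (f : Pt n → ℤ) (x : Pt n) : ℤ :=
  ∑ s : Finset (Fin n), (-1 : ℤ) ^ s.card * dlim f x (basisVec n s)

/-- Right continuity of f : ℝⁿ → ℤ. -/
def RightCont (f : Pt n → ℤ) : Prop :=
  ∀ x : Pt n, Filter.Tendsto f (nhdsWithin x (Set.Ici x)) (nhds (f x))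

/-- A nice function: right continuous, finitely supported differential,
support bounded below. -/
def NiceFn (f : Pt n → ℤ) : Prop :=
  RightCont f ∧ {x | diffl f x ≠ 0}.Finite ∧ ∃ a : ℝ, ∀ x, f x ≠ 0 → ∀ i, a ≤ x i

/-- Positive part Δf₊. -/
def difflp (f : Pt n → ℤ) (x : Pt n) : ℤ := max (diffl f x) 0
/-- Negative part Δf₋. -/
def difflm (f : Pt n → ℤ) (x : Pt n) : ℤ := min (diffl f x) 0

/-- Σ_{y ≤ x} g(y), as a finite sum over the support. -/
def sumLe (g : Pt n → ℤ) (x : Pt n) : ℤ := ∑ᶠ y ∈ {y : Pt n | y ≤ x}, g y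

/-- The δ-extension f^{+δ}(x) = f_{Σ+}(x+δ⃗) + f_{Σ−}(x−δ⃗). -/
def extend (f : Pt n → ℤ) (δ : ℝ) (x : Pt n) : ℤ :=
  sumLe (difflp f) (x + diag n δ) + sumLe (difflm f) (x - diag n δ)

/-- The δ-shrinking f^{−δ}(x) = f_{Σ−}(x+δ⃗) + f_{Σ+}(x−δ⃗). -/
def shrink (f : Pt n → ℤ) (δ : ℝ) (x : Pt n) : ℤ :=
  sumLe (difflm f) (x + diag n δ) + sumLe (difflp f) (x - diag n δ)

/-- d₊(f,g) = inf{δ : f ≤ g^{+δ}, g ≤ f^{+δ}}. -/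
def dplus (f g : Pt n → ℤ) : ℝ≥0∞ :=
  ⨅ (δ : ℝ≥0) (_ : (∀ x, f x ≤ extend g δ x) ∧ (∀ x, g x ≤ extend f δ x)), (δ : ℝ≥0∞)

/-- d₋(f,g) = inf{δ : f ≥ g^{−δ}, g ≥ f^{−δ}}. -/
def dminus (f g : Pt n → ℤ) : ℝ≥0∞ :=
  ⨅ (δ : ℝ≥0) (_ : (∀ x, shrink g δ x ≤ f x) ∧ (∀ x, shrink f δ x ≤ g x)), (δ : ℝ≥0∞)

/-- The dimension distance d₀ = min(d₋, d₊). -/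
def d0 (f g : Pt n → ℤ) : ℝ≥0∞ := min (dminus f g) (dplus f g)

/-- The dimension function dm M(x) = dim M_x (as an integer). -/
def dmFun (M : PersMod n k) : Pt n → ℤ := fun x => (Module.finrank k (M.V x) : ℤ)

/-- A nice persistence module: all structure maps over sufficiently small
diagonal shifts are injective or surjective. -/
def PersMod.Nice (M : PersMod n k) : Prop :=
  ∃ ε₀ > (0:ℝ), ∀ ε : ℝ, ∀ h0 : 0 < ε, ε < ε₀ → ∀ x : Pt n,
    Function.Injective (M.ρ (le_add_diag x h0.le)) ∨
      Function.Surjective (M.ρ (le_add_diag x h0.le))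

/-- Composition ρ_i ∘ ... ∘ ρ₁ of a chain of linear maps. -/
def chainComp {K : Type*} [Field K] (V : ℕ → Type*) [∀ i, AddCommGroup (V i)]
    [∀ i, Module K (V i)] (ρ : ∀ i, V i →ₗ[K] V (i+1)) : ∀ i, V 0 →ₗ[K] V i
  | 0 => LinearMap.id
  | (i+1) => (ρ i).comp (chainComp V ρ i)

/-! A linear map between subspaces of `k` is multiplication by the image of `1`. For comparable
points `x ≤ y` of `I_M ∩ I_N` both structure maps are identities, so naturality forces the scalars
at `x` and `y` to agree; zigzag connectedness spreads this over the whole component. -/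

variable (k) in
def intervalGen (I : Set (Pt n)) (x : Pt n) : ↥(subOf k I x) :=
  ⟨if x ∈ I then 1 else 0, by
    unfold subOf
    split_ifs
    exacts [Submodule.mem_top, Submodule.zero_mem _]⟩

lemma intervalGen_coe_of_mem {I : Set (Pt n)} {x : Pt n} (hx : x ∈ I) :
    (intervalGen k I x : k) = 1 :=
  if_pos hx

lemma Submodule.linearMap_apply_coe_eq_mul {S T : Submodule k k} (f : S →ₗ[k] T) {u : S}
    (hu : (u : k) = 1) (v : S) : (f v : k) = (f u : k) * v := by
  have hv : v = (v : k) • u := Subtype.ext (by simp [hu])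
  rw [hv, map_smul, Submodule.coe_smul, smul_eq_mul, mul_comm, ← hv]

lemma IntervalMod.ρ_coe_of_mem {I : Set (Pt n)} (hI : IsPInterval I) {x y : Pt n} (h : x ≤ y)
    (hy : y ∈ I) (v : ↥(subOf k I x)) :
    (show ↥(subOf k I y) from (IntervalMod k I hI).ρ h v : k) = v :=
  if_pos hy

lemma Zigzag.mem {A : Set (Pt n)} {p q : Pt n} (hp : p ∈ A) (h : Zigzag A p q) : q ∈ A := by
  induction h with
  | refl => exact hp
  | tail _ hbc => exact hbc.2.1

lemma Zigzag.apply_eq {α : Type*} {A : Set (Pt n)} {f : Pt n → α}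
    (hf : ∀ a ∈ A, ∀ b ∈ A, a ≤ b → f a = f b) {p q : Pt n} (h : Zigzag A p q) : f p = f q := by
  induction h with
  | refl => rfl
  | tail _ hbc ih =>
    obtain ⟨hb, hc, hle | hge⟩ := hbc
    · exact ih.trans (hf _ hb _ hc hle)
    · exact ih.trans (hf _ hc _ hb hge).symm

lemma PersHom.natural_apply {M N : PersMod n k} (φ : PersHom M N) {x y : Pt n} (h : x ≤ y)
    (v : M.V x) : φ.app y (M.ρ h v) = N.ρ h (φ.app x v) :=
  LinearMap.congr_fun (φ.natural h) v

section IntervalHom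

variable {IM IN : Set (Pt n)} {hM : IsPInterval IM} {hN : IsPInterval IN}

def PersHom.intervalCoeff (φ : PersHom (IntervalMod k IM hM) (IntervalMod k IN hN))
    (x : Pt n) : k :=
  (show ↥(subOf k IN x) from φ.app x (intervalGen k IM x) : k)

lemma PersHom.intervalCoeff_eq_of_le (φ : PersHom (IntervalMod k IM hM) (IntervalMod k IN hN))
    {x y : Pt n} (hx : x ∈ IM) (hy : y ∈ IM ∩ IN) (h : x ≤ y) :
    φ.intervalCoeff x = φ.intervalCoeff y := by
  have hgen : (IntervalMod k IM hM).ρ h (intervalGen k IM x) = intervalGen k IM y :=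
    Subtype.ext <| by
      rw [IntervalMod.ρ_coe_of_mem hM h hy.1, intervalGen_coe_of_mem hx,
        intervalGen_coe_of_mem hy.1]
  have hnat := congrArg Subtype.val (φ.natural_apply h (intervalGen k IM x))
  rw [hgen] at hnat
  exact (IntervalMod.ρ_coe_of_mem hN h hy.2 _).symm.trans hnat.symm

end IntervalHom

/-- A morphism between interval modules is constant on each
connected component of the intersection of the two intervals: there is a ∈ k
with φ_x = a·id on the component. -/
theorem stmt1 {n : ℕ} {k : Type*} [Field k] (IM IN I : Set (Pt n))
    (hM : IsPInterval IM) (hN : IsPInterval IN)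
    (hI : IsComponent (IM ∩ IN) I)
    (φ : PersHom (IntervalMod k IM hM) (IntervalMod k IN hN)) :
    ∃ a : k, ∀ x ∈ I, ∀ v : ↥(subOf k IM x),
      (show ↥(subOf k IN x) from φ.app x v : k) = a * (v : k) := by
  obtain ⟨p, hp, rfl⟩ := hI
  refine ⟨φ.intervalCoeff p, fun x hx v => ?_⟩
  have hxM : x ∈ IM := (hx.mem hp).1
  have hconst : φ.intervalCoeff p = φ.intervalCoeff x :=
    hx.apply_eq fun a ha b hb hab => φ.intervalCoeff_eq_of_le ha.1 hb hab
  rw [hconst]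
  exact Submodule.linearMap_apply_coe_eq_mul (φ.app x) (intervalGen_coe_of_mem hxM) v

end
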